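/- Let E be a Banach lattice and let A be an L-weakly compact subset of E. Then A is contained in the order continuous part E^a of E; that is, for every a ∈ A and every decreasing sequence (x_n) in E with 0 ≤ x_n ≤ |a| and infimum 0, one has ‖x_n‖ → 0. -/

import Mathlib

open Filter Topology

/-- The solid hull of a set in a Banach lattice. -/
def solHull {E : Type*} [NormedAddCommGroup E] [Lattice E] [HasSolidNorm E] [IsOrderedAddMonoid E] (A : Set E) : Set E :=
  {x | ∃ a ∈ A, |x| ≤ |a|}

/-- A subset of a Banach lattice is L-weakly compact (Lwc) if it is norm bounded and every
disjoint sequence in its solid hull is norm null. -/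
def IsLwcSet {E : Type*} [NormedAddCommGroup E] [Lattice E] [HasSolidNorm E] [IsOrderedAddMonoid E] (A : Set E) : Prop :=
  Bornology.IsBounded A ∧
    ∀ x : ℕ → E, (∀ n, x n ∈ solHull A) →
      (∀ n m, n ≠ m → |x n| ⊓ |x m| = 0) →
        Tendsto (fun n => ‖x n‖) atTop (𝓝 0)

/-- The order continuous part `E^a` of a Banach lattice `E`. -/
def orderContinuousPart (E : Type*) [NormedAddCommGroup E] [Lattice E] [HasSolidNorm E] [IsOrderedAddMonoid E] : Set E :=
  {x | ∀ y : ℕ → E, Antitone y → (∀ n, 0 ≤ y n) → (∀ n, y n ≤ |x|) →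
        IsGLB (Set.range y) 0 → Tendsto (fun n => ‖y n‖) atTop (𝓝 0)}

/-!
Fix `a ∈ A` and put `u = |a|`: the hypothesis on `A` says that disjoint sequences in `[0, u]` are
norm null. A decreasing sequence `0 ≤ yₙ ≤ u` with infimum `0` that is Cauchy converges to its
infimum. Otherwise its gaps along a subsequence give `zₖ ≥ 0` with `‖zₖ‖ ≥ ε` and all partial sums
`≤ u`. If `M • c = u`, any `M + 1` of the elements `(zₖ - c)⁺` have infimum `0`, and by induction
on this number every such sequence in `[0, u]` is norm null: the induction hypothesis makes each
`k ↦ gⱼ ⊓ gₖ` norm null, so some subsequence `G` is almost disjoint, and then its disjointification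
`(G_l - l • ∑_{j<l} G_j - u / (l + 1))⁺` is disjoint and norm close to `G`.
Since `‖zₖ‖ ≤ ‖(zₖ - c)⁺‖ + ‖u‖ / M`, this contradicts `‖zₖ‖ ≥ ε`.
-/

open Finset

section MeetsVanish

variable {α : Type*} [Lattice α] [Zero α]

-- Any `n` distinct terms of `g` have infimum `0`, phrased through their positive lower bounds;
-- this is only meaningful for `n ≠ 0`.
def MeetsVanish (g : ℕ → α) (n : ℕ) : Prop :=
  ∀ s : Finset ℕ, #s = n → ∀ x, 0 ≤ x → (∀ i ∈ s, x ≤ g i) → x = 0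

theorem MeetsVanish.comp {g : ℕ → α} {n : ℕ} (hg : MeetsVanish g n) {φ : ℕ → ℕ}
    (hφ : φ.Injective) : MeetsVanish (g ∘ φ) n := by
  intro s hs x hx hxs
  exact hg (s.map ⟨φ, hφ⟩) (by simpa using hs) x hx (by simpa using hxs)

theorem MeetsVanish.inf_shift {g : ℕ → α} {n : ℕ} (hg : MeetsVanish g (n + 2)) (j : ℕ) :
    MeetsVanish (fun k => g j ⊓ g (k + (j + 1))) (n + 1) := by
  classical
  intro s hs x hx hxs
  have hj : j ∉ s.map (addRightEmbedding (j + 1)) := by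
    simp only [Finset.mem_map, addRightEmbedding_apply, not_exists, not_and]
    intros
    omega
  refine hg _ (by rw [card_insert_of_notMem hj, card_map, hs]) x hx fun i hi => ?_
  rcases Finset.mem_insert.1 hi with rfl | hi
  · obtain ⟨i₀, hi₀⟩ : s.Nonempty := card_pos.1 (by omega)
    exact (hxs i₀ hi₀).trans inf_le_left
  · obtain ⟨k, hk, rfl⟩ := Finset.mem_map.1 hi
    exact (hxs k hk).trans inf_le_right

end MeetsVanish

section LatticeOrderedGroup

variable {α : Type*} [AddCommGroup α] [Lattice α] [IsOrderedAddMonoid α]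

theorem inf_add_le_add_inf {a b c : α} (ha : 0 ≤ a) (hb : 0 ≤ b) (hc : 0 ≤ c) :
    a ⊓ (b + c) ≤ a ⊓ b + a ⊓ c := by
  have hc' : a ⊓ (b + c) ≤ a ⊓ b + c := by
    rw [inf_add]
    exact inf_le_inf_right _ (le_add_of_nonneg_right hc)
  have ha' : a ⊓ (b + c) ≤ a ⊓ b + a :=
    inf_le_left.trans (le_add_of_nonneg_left (le_inf ha hb))
  calc a ⊓ (b + c) ≤ (a ⊓ b + c) ⊓ (a ⊓ b + a) := le_inf hc' ha'
    _ = a ⊓ b + a ⊓ c := by rw [← add_inf, inf_comm c]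

theorem inf_sum_le_sum_inf {ι : Type*} {a : α} {s : Finset ι} {f : ι → α} (ha : 0 ≤ a)
    (hf : ∀ i ∈ s, 0 ≤ f i) : a ⊓ ∑ i ∈ s, f i ≤ ∑ i ∈ s, a ⊓ f i := by
  classical
  induction s using Finset.induction_on with
  | empty => simp [ha]
  | insert j s hj ih =>
    rw [sum_insert hj, sum_insert hj]
    have hfj := hf j (mem_insert_self j s)
    have hfs : ∀ i ∈ s, 0 ≤ f i := fun i hi => hf i (mem_insert_of_mem hi)
    calc a ⊓ (f j + ∑ i ∈ s, f i) ≤ a ⊓ f j + a ⊓ ∑ i ∈ s, f i :=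
          inf_add_le_add_inf ha hfj (sum_nonneg hfs)
      _ ≤ a ⊓ f j + ∑ i ∈ s, a ⊓ f i := add_le_add le_rfl (ih hfs)

theorem inf_nsmul_le_nsmul_inf {a b : α} (ha : 0 ≤ a) (hb : 0 ≤ b) (n : ℕ) :
    a ⊓ n • b ≤ n • (a ⊓ b) := by
  simpa using inf_sum_le_sum_inf (s := range n) (f := fun _ => b) ha fun _ _ => hb

theorem nonneg_of_nsmul_nonneg {x : α} {n : ℕ} (hn : n ≠ 0) (h : 0 ≤ n • x) : 0 ≤ x := by
  have hneg : x⁻ ≤ n • x⁺ := calc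
    x⁻ = 1 • x⁻ := (one_nsmul _).symm
    _ ≤ n • x⁻ := nsmul_le_nsmul_left (negPart_nonneg x) (Nat.one_le_iff_ne_zero.2 hn)
    _ ≤ n • x⁺ := by rwa [← sub_nonneg, ← nsmul_sub, posPart_sub_negPart]
  have : x⁻ ≤ n • (x⁻ ⊓ x⁺) :=
    (le_inf le_rfl hneg).trans (inf_nsmul_le_nsmul_inf (negPart_nonneg x) (posPart_nonneg x) n)
  rw [inf_comm, posPart_inf_negPart_eq_zero, nsmul_zero] at this
  exact negPart_eq_zero.1 (le_antisymm this (negPart_nonneg x))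

theorem inv_natCast_smul_nonneg [Module ℝ α] {u : α} (hu : 0 ≤ u) (n : ℕ) :
    0 ≤ (n : ℝ)⁻¹ • u := by
  rcases eq_or_ne n 0 with rfl | hn
  · simp
  · refine nonneg_of_nsmul_nonneg hn ?_
    rwa [← Nat.cast_smul_eq_nsmul ℝ, smul_inv_smul₀ (Nat.cast_ne_zero.2 hn)]

theorem posPart_sub_le_self {a c : α} (ha : 0 ≤ a) (hc : 0 ≤ c) : (a - c)⁺ ≤ a :=
  sup_le (sub_le_self a hc) ha

theorem meetsVanish_posPart_sub {z : ℕ → α} {u c : α} {M : ℕ} (hz : ∀ k, 0 ≤ z k)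
    (hsum : ∀ s : Finset ℕ, ∑ i ∈ s, z i ≤ u) (hc : 0 ≤ c) (hMc : M • c = u) :
    MeetsVanish (fun k => (z k - c)⁺) (M + 1) := by
  intro s hs x hx hxs
  have hdisj : ∀ i ∈ s, x ⊓ (c - z i)⁺ = 0 := fun i hi => by
    refine le_antisymm ?_ (le_inf hx (posPart_nonneg _))
    calc x ⊓ (c - z i)⁺ ≤ (z i - c)⁺ ⊓ (z i - c)⁻ := by
          rw [← posPart_neg, neg_sub]
          exact inf_le_inf_right _ (hxs i hi)
      _ = 0 := posPart_inf_negPart_eq_zero _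
  have hc_le : c ≤ ∑ i ∈ s, (c - z i)⁺ := calc
    c = (M + 1) • c - u := by rw [succ_nsmul, hMc, add_sub_cancel_left]
    _ ≤ (M + 1) • c - ∑ i ∈ s, z i := sub_le_sub_left (hsum s) _
    _ = ∑ i ∈ s, (c - z i) := by rw [sum_sub_distrib, sum_const, hs]
    _ ≤ ∑ i ∈ s, (c - z i)⁺ := sum_le_sum fun i _ => le_posPart _
  have hxc : x ⊓ c = 0 := by
    refine le_antisymm ?_ (le_inf hx hc)
    calc x ⊓ c ≤ x ⊓ ∑ i ∈ s, (c - z i)⁺ := inf_le_inf_left _ hc_le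
      _ ≤ ∑ i ∈ s, x ⊓ (c - z i)⁺ := inf_sum_le_sum_inf hx fun i _ => posPart_nonneg _
      _ = 0 := sum_eq_zero hdisj
  obtain ⟨i₀, hi₀⟩ : s.Nonempty := card_pos.1 (by omega)
  have hxu : x ≤ u := calc
    x ≤ (z i₀ - c)⁺ := hxs i₀ hi₀
    _ ≤ z i₀ := posPart_sub_le_self (hz i₀) hc
    _ ≤ ∑ i ∈ s, z i := single_le_sum (fun i _ => hz i) hi₀
    _ ≤ u := hsum s
  refine le_antisymm ?_ hx
  calc x = x ⊓ M • c := by rw [hMc, inf_eq_left.2 hxu]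
    _ ≤ M • (x ⊓ c) := inf_nsmul_le_nsmul_inf hx hc M
    _ = 0 := by rw [hxc, nsmul_zero]

def disjointify (G w : ℕ → α) (l : ℕ) : α :=
  (G l - (l • ∑ j ∈ range l, G j + w l))⁺

variable {G w : ℕ → α}

theorem disjointify_le (hG : ∀ l, 0 ≤ G l) (hw : ∀ l, 0 ≤ w l) (l : ℕ) :
    disjointify G w l ≤ G l :=
  posPart_sub_le_self (hG l) (add_nonneg (nsmul_nonneg (sum_nonneg fun j _ => hG j) l) (hw l))

theorem disjointify_inf_eq_zero {u : α} (hG : ∀ l, 0 ≤ G l) (hGu : ∀ l, G l ≤ u)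
    (hw : ∀ l, 0 ≤ w l) (huw : ∀ m l, m < l → u ≤ l • w m) {m l : ℕ} (hml : m < l) :
    disjointify G w m ⊓ disjointify G w l = 0 := by
  -- the `m`-th term lives where `G m ≥ w m`, the `l`-th where `l • G m ≤ u ≤ l • w m`
  set x := w m - G m
  have hm : disjointify G w m ≤ x⁻ := by
    rw [← posPart_neg, neg_sub]
    exact posPart_mono (sub_le_sub_left
      (le_add_of_nonneg_left (nsmul_nonneg (sum_nonneg fun j _ => hG j) m)) _)
  have hGml : l • G m ≤ l • ∑ j ∈ range l, G j + w l :=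
    (nsmul_le_nsmul_right (single_le_sum (fun j _ => hG j) (mem_range.2 hml)) l).trans
      (le_add_of_nonneg_right (hw l))
  have hl : disjointify G w l ≤ l • x⁺ := calc
    disjointify G w l ≤ (l • w m - l • G m)⁺ :=
        posPart_mono (sub_le_sub ((hGu l).trans (huw m l hml)) hGml)
    _ = (l • x)⁺ := by rw [nsmul_sub]
    _ ≤ l • x⁺ :=
        sup_le (nsmul_le_nsmul_right (le_posPart x) l) (nsmul_nonneg (posPart_nonneg x) l)
  refine le_antisymm ?_ (le_inf (posPart_nonneg _) (posPart_nonneg _))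
  calc disjointify G w m ⊓ disjointify G w l ≤ x⁻ ⊓ l • x⁺ := inf_le_inf hm hl
    _ ≤ l • (x⁻ ⊓ x⁺) := inf_nsmul_le_nsmul_inf (negPart_nonneg x) (posPart_nonneg x) l
    _ = 0 := by rw [inf_comm, posPart_inf_negPart_eq_zero, nsmul_zero]

theorem pairwise_disjointify {u : α} (hG : ∀ l, 0 ≤ G l) (hGu : ∀ l, G l ≤ u)
    (hw : ∀ l, 0 ≤ w l) (huw : ∀ m l, m < l → u ≤ l • w m) :
    Pairwise fun m l => disjointify G w m ⊓ disjointify G w l = 0 := by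
  intro m l hml
  rcases hml.lt_or_gt with h | h
  · exact disjointify_inf_eq_zero hG hGu hw huw h
  · rw [inf_comm]
    exact disjointify_inf_eq_zero hG hGu hw huw h

end LatticeOrderedGroup

theorem exists_strictMono_forall_lt_le {h : ℕ → ℕ → ℝ} (hh : ∀ j, Tendsto (h j) atTop (𝓝 0))
    {ε : ℕ → ℝ} (hε : ∀ l, 0 < ε l) :
    ∃ F : ℕ → ℕ, StrictMono F ∧ ∀ j l, j < l → h (F j) (F l) ≤ ε l := by
  have hnext : ∀ T l, ∃ k, T < k ∧ ∀ j ≤ T, h j k ≤ ε l := fun T l => by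
    have hev : ∀ᶠ k in atTop, ∀ j ∈ range (T + 1), h j k ≤ ε l :=
      (eventually_all_finset _).2 fun j _ => (hh j).eventually (eventually_le_nhds (hε l))
    obtain ⟨k, hk, hTk⟩ := (hev.and (eventually_gt_atTop T)).exists
    exact ⟨k, hTk, fun j hj => hk j (mem_range.2 (Nat.lt_succ_of_le hj))⟩
  choose next hnext_gt hnext_le using hnext
  let F : ℕ → ℕ := fun l => Nat.rec 0 (fun l prev => next prev (l + 1)) l
  have hF : StrictMono F := strictMono_nat_of_lt_succ fun l => hnext_gt (F l) (l + 1)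
  refine ⟨F, hF, fun j l hjl => ?_⟩
  obtain ⟨l, rfl⟩ := Nat.exists_eq_add_of_lt hjl
  exact hnext_le (F (j + l)) (j + l + 1) (F j) (hF.monotone (Nat.le_add_right j l))

def DisjointSeqsNormNull {E : Type*} [NormedAddCommGroup E] [Lattice E] (u : E) : Prop :=
  ∀ x : ℕ → E, (∀ n, x n ∈ Set.Icc 0 u) → Pairwise (fun n m => x n ⊓ x m = 0) →
    Tendsto (fun n => ‖x n‖) atTop (𝓝 0)

section NormedLattice

variable {E : Type*} [NormedAddCommGroup E] [Lattice E] [HasSolidNorm E] [IsOrderedAddMonoid E]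

theorem IsLwcSet.disjointSeqsNormNull {A : Set E} (hA : IsLwcSet A) {a : E} (ha : a ∈ A) :
    DisjointSeqsNormNull |a| := by
  intro x hx hdisj
  refine hA.2 x (fun n => ⟨a, ha, ?_⟩) fun n m hnm => ?_
  · rw [abs_of_nonneg (hx n).1]
    exact (hx n).2
  · rw [abs_of_nonneg (hx n).1, abs_of_nonneg (hx m).1]
    exact hdisj hnm

theorem norm_le_norm_of_nonneg_of_le {a b : E} (ha : 0 ≤ a) (hab : a ≤ b) : ‖a‖ ≤ ‖b‖ :=
  norm_le_norm_of_abs_le_abs (by rwa [abs_of_nonneg ha, abs_of_nonneg (ha.trans hab)])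

theorem norm_le_norm_posPart_sub_add {x c d : E} (hx : 0 ≤ x) (hc : 0 ≤ c) (hd : x ⊓ c ≤ d) :
    ‖x‖ ≤ ‖(x - c)⁺‖ + ‖d‖ := calc
  ‖x‖ = ‖(x - c)⁺ + x ⊓ c‖ := by rw [inf_eq_sub_posPart_sub, add_sub_cancel]
  _ ≤ ‖(x - c)⁺‖ + ‖x ⊓ c‖ := norm_add_le _ _
  _ ≤ ‖(x - c)⁺‖ + ‖d‖ := by
    gcongr
    exact norm_le_norm_of_nonneg_of_le (le_inf hx hc) hd

theorem norm_le_norm_disjointify_add {G w : ℕ → E} (hG : ∀ l, 0 ≤ G l) (hw : ∀ l, 0 ≤ w l)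
    (l : ℕ) : ‖G l‖ ≤ ‖disjointify G w l‖ + (l * ∑ j ∈ range l, ‖G j ⊓ G l‖ + ‖w l‖) := by
  have hS : 0 ≤ ∑ j ∈ range l, G j := sum_nonneg fun j _ => hG j
  have hinf : G l ⊓ (l • ∑ j ∈ range l, G j + w l) ≤ l • ∑ j ∈ range l, G j ⊓ G l + w l := calc
    _ ≤ G l ⊓ l • ∑ j ∈ range l, G j + G l ⊓ w l :=
        inf_add_le_add_inf (hG l) (nsmul_nonneg hS l) (hw l)
    _ ≤ l • (G l ⊓ ∑ j ∈ range l, G j) + w l :=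
        add_le_add (inf_nsmul_le_nsmul_inf (hG l) hS l) inf_le_right
    _ ≤ l • ∑ j ∈ range l, G l ⊓ G j + w l :=
        add_le_add (nsmul_le_nsmul_right (inf_sum_le_sum_inf (hG l) fun j _ => hG j) l) le_rfl
    _ = l • ∑ j ∈ range l, G j ⊓ G l + w l := by simp_rw [inf_comm (G l)]
  refine (norm_le_norm_posPart_sub_add (hG l) (add_nonneg (nsmul_nonneg hS l) (hw l)) hinf).trans
    (add_le_add le_rfl ?_)
  calc ‖l • ∑ j ∈ range l, G j ⊓ G l + w l‖ ≤ ‖l • ∑ j ∈ range l, G j ⊓ G l‖ + ‖w l‖ :=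
        norm_add_le _ _
    _ ≤ l * ∑ j ∈ range l, ‖G j ⊓ G l‖ + ‖w l‖ := by
        gcongr
        exact norm_nsmul_le.trans (by gcongr; exact norm_sum_le _ _)

end NormedLattice

theorem Antitone.tendsto_of_cauchySeq_of_isGLB {X : Type*} [UniformSpace X] [CompleteSpace X]
    [PartialOrder X] [OrderClosedTopology X] {y : ℕ → X} {a : X} (hy : Antitone y)
    (hglb : IsGLB (Set.range y) a) (hc : CauchySeq y) : Tendsto y atTop (𝓝 a) := by
  obtain ⟨p, hp⟩ := cauchySeq_tendsto_of_complete hc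
  rwa [(isGLB_of_tendsto_atTop hy hp).unique hglb] at hp

section NormedSpace

variable {E : Type*} [NormedAddCommGroup E] [Lattice E] [HasSolidNorm E] [IsOrderedAddMonoid E]
  [NormedSpace ℝ E] {u : E}

theorem DisjointSeqsNormNull.exists_strictMono_tendsto_norm (H : DisjointSeqsNormNull u)
    {g : ℕ → E} (hg : ∀ k, g k ∈ Set.Icc 0 u)
    (hinf : ∀ j, Tendsto (fun k => ‖g j ⊓ g k‖) atTop (𝓝 0)) :
    ∃ F : ℕ → ℕ, StrictMono F ∧ Tendsto (fun l => ‖g (F l)‖) atTop (𝓝 0) := by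
  obtain ⟨F, hF, hsmall⟩ := exists_strictMono_forall_lt_le hinf
    (ε := fun l => (((l : ℝ) + 1) ^ 3)⁻¹) fun l => by positivity
  set G := g ∘ F
  set w : ℕ → E := fun l => ((l : ℝ) + 1)⁻¹ • u
  have hG0 : ∀ l, 0 ≤ G l := fun l => (hg _).1
  have hu : 0 ≤ u := (hg 0).1.trans (hg 0).2
  have hw0 : ∀ l, 0 ≤ w l := fun l => by simpa using inv_natCast_smul_nonneg hu (l + 1)
  have hwu : ∀ m l, m < l → u ≤ l • w m := fun m l hml => calc
    u = (m + 1) • w m := by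
      rw [← Nat.cast_smul_eq_nsmul ℝ, Nat.cast_add_one, smul_inv_smul₀ (by positivity)]
    _ ≤ l • w m := nsmul_le_nsmul_left (hw0 m) hml
  have hdisj : Tendsto (fun l => ‖disjointify G w l‖) atTop (𝓝 0) :=
    H _ (fun l => ⟨posPart_nonneg _, (disjointify_le hG0 hw0 l).trans (hg _).2⟩)
      (pairwise_disjointify hG0 (fun l => (hg _).2) hw0 hwu)
  have hnear : Tendsto (fun l : ℕ => (l : ℝ) * ∑ j ∈ range l, ‖G j ⊓ G l‖) atTop (𝓝 0) := by
    refine squeeze_zero (fun l => by positivity) (fun l => ?_)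
      tendsto_one_div_add_atTop_nhds_zero_nat
    calc (l : ℝ) * ∑ j ∈ range l, ‖G j ⊓ G l‖ ≤ l * (l * (((l : ℝ) + 1) ^ 3)⁻¹) := by
          gcongr
          refine (sum_le_card_nsmul _ _ _ fun j hj => hsmall j l (mem_range.1 hj)).trans_eq ?_
          simp
      _ ≤ 1 / ((l : ℝ) + 1) := by
          rw [← div_eq_mul_inv, mul_div_assoc', div_le_div_iff₀ (by positivity) (by positivity)]
          nlinarith
  have hw : Tendsto (fun l => ‖w l‖) atTop (𝓝 0) := by
    have hnorm : ∀ l, ‖w l‖ = ((l : ℝ) + 1)⁻¹ * ‖u‖ := fun l => by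
      rw [norm_smul, norm_inv, Real.norm_of_nonneg (by positivity)]
    simpa [hnorm] using (tendsto_one_div_add_atTop_nhds_zero_nat (𝕜 := ℝ)).mul_const ‖u‖
  refine ⟨F, hF, squeeze_zero (fun l => norm_nonneg _)
    (fun l => norm_le_norm_disjointify_add hG0 hw0 l) ?_⟩
  simpa using hdisj.add (hnear.add hw)

theorem DisjointSeqsNormNull.tendsto_norm_of_meetsVanish (H : DisjointSeqsNormNull u) (n : ℕ)
    {g : ℕ → E} (hg : ∀ k, g k ∈ Set.Icc 0 u) (hgn : MeetsVanish g (n + 1)) :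
    Tendsto (fun k => ‖g k‖) atTop (𝓝 0) := by
  induction n generalizing g with
  | zero =>
    have : ∀ k, g k = 0 := fun k => hgn {k} (card_singleton k) (g k) (hg k).1 (by simp)
    simp [this]
  | succ n ih =>
    refine tendsto_of_subseq_tendsto fun ns hns => ?_
    obtain ⟨φ, -, hφ⟩ := strictMono_subseq_of_tendsto_atTop hns
    have hinf : ∀ j, Tendsto (fun k => ‖g (ns (φ j)) ⊓ g (ns (φ k))‖) atTop (𝓝 0) := fun j =>
      (tendsto_add_atTop_iff_nat (j + 1)).1 <|
        ih (fun k => ⟨le_inf (hg _).1 (hg _).1, inf_le_left.trans (hg _).2⟩)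
          ((hgn.comp hφ.injective).inf_shift j)
    obtain ⟨F, -, hF⟩ := H.exists_strictMono_tendsto_norm (fun k => hg _) hinf
    exact ⟨φ ∘ F, hF⟩

theorem DisjointSeqsNormNull.tendsto_norm_of_sum_range_le (H : DisjointSeqsNormNull u)
    {z : ℕ → E} (hz : ∀ k, 0 ≤ z k) (hsum : ∀ n, ∑ k ∈ range n, z k ≤ u) :
    Tendsto (fun k => ‖z k‖) atTop (𝓝 0) := by
  have hsum' : ∀ s : Finset ℕ, ∑ k ∈ s, z k ≤ u := fun s =>
    (sum_le_sum_of_subset_of_nonneg (subset_range_sup_succ s) fun k _ _ => hz k).trans (hsum _)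
  have hu : 0 ≤ u := by simpa using hsum 0
  have hzu : ∀ k, z k ≤ u := fun k => by simpa using hsum' {k}
  refine tendsto_order.2 ⟨fun a ha => Eventually.of_forall fun k => ha.trans_le (norm_nonneg _),
    fun ε hε => ?_⟩
  have hsmall : Tendsto (fun M : ℕ => (M : ℝ)⁻¹ * ‖u‖) atTop (𝓝 0) := by
    simpa using (tendsto_inv_atTop_zero.comp tendsto_natCast_atTop_atTop).mul_const ‖u‖
  obtain ⟨M, hMu, hM⟩ :=
    ((hsmall.eventually (gt_mem_nhds (half_pos hε))).and (eventually_ne_atTop 0)).exists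
  set c : E := (M : ℝ)⁻¹ • u
  have hc : 0 ≤ c := inv_natCast_smul_nonneg hu M
  have hMc : M • c = u := by
    rw [← Nat.cast_smul_eq_nsmul ℝ, smul_inv_smul₀ (Nat.cast_ne_zero.2 hM)]
  have hD : Tendsto (fun k => ‖(z k - c)⁺‖) atTop (𝓝 0) :=
    H.tendsto_norm_of_meetsVanish M
      (fun k => ⟨posPart_nonneg _, (posPart_sub_le_self (hz k) hc).trans (hzu k)⟩)
      (meetsVanish_posPart_sub hz hsum' hc hMc)
  filter_upwards [hD.eventually (gt_mem_nhds (half_pos hε))] with k hk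
  calc ‖z k‖ ≤ ‖(z k - c)⁺‖ + ‖c‖ := norm_le_norm_posPart_sub_add (hz k) hc inf_le_right
    _ < ε / 2 + ε / 2 := add_lt_add hk (by rwa [norm_smul, norm_inv, Real.norm_natCast])
    _ = ε := add_halves ε

theorem DisjointSeqsNormNull.cauchySeq_of_antitone (H : DisjointSeqsNormNull u) {y : ℕ → E}
    (hy : Antitone y) (hy0 : ∀ n, 0 ≤ y n) (hyu : y 0 ≤ u) : CauchySeq y := by
  rw [Metric.cauchySeq_iff']
  by_contra! hfar
  obtain ⟨ε, hε, hfar⟩ := hfar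
  choose next hnext_ge hnext_far using hfar
  set φ : ℕ → ℕ := fun k => next^[k] 0
  have hφ_succ : ∀ k, φ (k + 1) = next (φ k) := fun k => Function.iterate_succ_apply' next k 0
  have hφ : Monotone φ := monotone_nat_of_le_succ fun k => (hφ_succ k).symm ▸ hnext_ge (φ k)
  have hz : Tendsto (fun k => ‖y (φ k) - y (φ (k + 1))‖) atTop (𝓝 0) := by
    refine H.tendsto_norm_of_sum_range_le (fun k => sub_nonneg.2 (hy (hφ k.le_succ))) fun n => ?_
    rw [sum_range_sub' (fun k => y (φ k)) n]
    exact (sub_le_self _ (hy0 _)).trans hyu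
  obtain ⟨k, hk⟩ := (hz.eventually (gt_mem_nhds hε)).exists
  have hfar_k := hnext_far (φ k)
  rw [← hφ_succ, dist_eq_norm, norm_sub_rev] at hfar_k
  exact hk.not_ge hfar_k

end NormedSpace

/-- Every L-weakly compact subset of a Banach lattice is contained in the order continuous
part `E^a`. -/
theorem lwcSet_subset_orderContinuousPart
    {E : Type*} [NormedAddCommGroup E] [Lattice E] [HasSolidNorm E] [IsOrderedAddMonoid E] [NormedSpace ℝ E] [CompleteSpace E]
    (A : Set E) (hA : IsLwcSet A) :
    A ⊆ orderContinuousPart E := by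
  intro a ha y hy hy0 hya hglb
  have H := hA.disjointSeqsNormNull ha
  exact tendsto_zero_iff_norm_tendsto_zero.1
    (hy.tendsto_of_cauchySeq_of_isGLB hglb (H.cauchySeq_of_antitone hy hy0 (hya 0)))
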